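/- Let n, n' ≥ 2, c ∈ ℂ^n, c' ∈ ℂ^{n'}, and let W_c = Im F(c) ⊆ V^{⊗n} and W_{c'} = Im F(c') ⊆ V^{⊗n'}. Then for every u ∈ ℂ the fused operator R_{c,c'}(u) maps the subspace W_c ⊗ W_{c'} of V^{⊗n} ⊗ V^{⊗n'} into itself. -/

import Mathlib

/-!
We model the finite-dimensional complex vector space `V` as `ℂ^N` (i.e. `Fin N → ℂ`),
so that `V^{⊗ n}` is `(Fin n → Fin N) → ℂ` and endomorphisms of `V^{⊗ n}` are matrices
indexed by multi-indices `Fin n → Fin N`.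
-/

open scoped BigOperators

noncomputable section

/-- Endomorphisms of `V ⊗ V` for `V = ℂ^N`. -/
abbrev End2 (N : ℕ) := Matrix (Fin N × Fin N) (Fin N × Fin N) ℂ

/-- Endomorphisms of `V^{⊗ n}` for `V = ℂ^N`. -/
abbrev EndT (N n : ℕ) := Matrix (Fin n → Fin N) (Fin n → Fin N) ℂ

/-- `X_{a,b}` : the endomorphism `X` of `V ⊗ V` applied to the tensor factors `a` and `b`
(in that order) of `V^{⊗ n}`, and the identity on all other factors. -/
def op2 (N n : ℕ) (X : End2 N) (a b : Fin n) : EndT N n :=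
  fun f g => X (f a, f b) (g a, g b) *
    ∏ i : Fin n, if i ≠ a ∧ i ≠ b then (if f i = g i then (1 : ℂ) else 0) else 1

/-- The flip (permutation) operator `P : x ⊗ y ↦ y ⊗ x` on `V ⊗ V`. -/
def flipMat (N : ℕ) : End2 N := fun p q => if p.1 = q.2 ∧ p.2 = q.1 then 1 else 0

/-- `R` is a solution of the Yang--Baxter equation (with additive spectral parameters)
on `V ⊗ V ⊗ V`:  `R₁₂(u) R₁₃(u+v) R₂₃(v) = R₂₃(v) R₁₃(u+v) R₁₂(u)`. -/
def YangBaxter (N : ℕ) (R : ℂ → End2 N) : Prop :=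
  ∀ u v : ℂ,
    op2 N 3 (R u) 0 1 * op2 N 3 (R (u + v)) 0 2 * op2 N 3 (R v) 1 2 =
    op2 N 3 (R v) 1 2 * op2 N 3 (R (u + v)) 0 2 * op2 N 3 (R u) 0 1

/-- The fused operator `R_{c,c'}(u)`, acting on `V^{⊗ m}`, where the `n` factors of the first
block are embedded via `a` and the `n'` factors of the second block via `b`:
`R_{c,c'}(u) = ∏→_{i=1..n'} [ R_{n,i'}(u+c_n−c'_i) ⋯ R_{2,i'}(u+c_2−c'_i) R_{1,i'}(u+c_1−c'_i) ]`. -/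
def fusedOp (N : ℕ) (R : ℂ → End2 N) {m n n' : ℕ} (a : Fin n → Fin m) (b : Fin n' → Fin m)
    (c : Fin n → ℂ) (c' : Fin n' → ℂ) (u : ℂ) : EndT N m :=
  ((List.finRange n').map fun i =>
    (((List.finRange n).reverse).map fun k =>
      op2 N m (R (u + c k - c' i)) (a k) (b i)).prod).prod

/-- The list of pairs `(i,j)` with `i < j`, in lexicographic order. -/
def lexPairs (n : ℕ) : List (Fin n × Fin n) :=
  (List.finRange n).flatMap fun i =>
    ((List.finRange n).filter fun j => decide (i < j)).map fun j => (i, j)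

/-- The operator `F(c) = ∏→_{1 ≤ i < j ≤ n} R_{i,j}(c_i − c_j)` on `V^{⊗ n}`
(product over the pairs `i < j` in lexicographic order). -/
def Fop (N : ℕ) (R : ℂ → End2 N) {n : ℕ} (c : Fin n → ℂ) : EndT N n :=
  ((lexPairs n).map fun p => op2 N n (R (c p.1 - c p.2)) p.1 p.2).prod

/-- The endomorphism of `V^{⊗ n}` embedded into `V^{⊗ m}`, acting on the factors listed
by `e` and identically on all other factors. -/
def opBlock (N : ℕ) {m n : ℕ} (e : Fin n → Fin m) (X : EndT N n) : EndT N m :=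
  fun f g => X (f ∘ e) (g ∘ e) *
    ∏ i : Fin m, if ∀ k, e k ≠ i then (if f i = g i then (1 : ℂ) else 0) else 1

/-- The operator `P_π` on `V^{⊗ n}` permuting the tensor factors:
`P_π (x_1 ⊗ ⋯ ⊗ x_n) = x_{π(1)} ⊗ ⋯ ⊗ x_{π(n)}`. -/
def permMat (N n : ℕ) (π : Equiv.Perm (Fin n)) : EndT N n :=
  fun f g => if f = g ∘ π then 1 else 0

/-- The tensor product of a vector of `V^{⊗ n}` and a vector of `V^{⊗ n'}`,
as a vector of `V^{⊗ (n+n')}`. -/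
def tensVec (N : ℕ) {n n' : ℕ} (x : (Fin n → Fin N) → ℂ) (y : (Fin n' → Fin N) → ℂ) :
    (Fin (n + n') → Fin N) → ℂ :=
  fun f => x (fun i => f (Fin.castAdd n' i)) * y (fun j => f (Fin.natAdd n j))

end

/-!
Write `P = F(c) ⊗ 1` and `Q = 1 ⊗ F(c')`, and view `R_{c,c'}(u)` as a grid of factors
`R_{k,i'}(u + c_k − c'_i)`. In a single column `i`, the Yang–Baxter equation for the triple
`(a, b, i')` lets each factor `R_{a,b}(c_a − c_b)` of `P` pass the column while reversing the
order of `R_{a,i'}` and `R_{b,i'}`, so `R_{c,c'}(u) P = P T`, with `T` the grid with every column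
reversed. Factors in different rows and columns act on disjoint sites and commute, so `T` can
be read row by row, and the same argument in each row `k` moves `Q` through: `T Q = Q S`.
Hence `R_{c,c'}(u) P Q = P Q S`, and the range of `P Q` is invariant.
-/

section OrderedPairs

variable {α : Type*}

def orderedPairs : List α → List (α × α)
  | [] => []
  | a :: l => l.map (a, ·) ++ orderedPairs l

lemma mem_orderedPairs {l : List α} {p : α × α} (hp : p ∈ orderedPairs l) :
    p.1 ∈ l ∧ p.2 ∈ l := by
  induction l with
  | nil => simp [orderedPairs] at hp
  | cons a l ih =>
    simp only [orderedPairs, List.mem_append, List.mem_map] at hp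
    rcases hp with ⟨b, hb, rfl⟩ | hp
    · simp [hb]
    · exact (ih hp).imp (List.mem_cons_of_mem a) (List.mem_cons_of_mem a)

lemma orderedPairs_eq_flatMap_filter [LinearOrder α] {l : List α} (hl : l.Pairwise (· < ·)) :
    orderedPairs l = l.flatMap fun a => (l.filter fun b => a < b).map (a, ·) := by
  induction l with
  | nil => rfl
  | cons a l ih =>
    obtain ⟨ha, hl⟩ := List.pairwise_cons.mp hl
    have head : (a :: l).filter (fun b => a < b) = l := by
      rw [List.filter_cons_of_neg (by simp),
        List.filter_eq_self.mpr fun b hb => by simpa using ha b hb]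
    have tail : ∀ b ∈ l, (a :: l).filter (fun x => b < x) = l.filter fun x => b < x :=
      fun b hb => by simp [(ha b hb).le.not_gt]
    rw [orderedPairs, ih hl, List.flatMap_cons, head]
    exact congrArg _ (List.flatMap_congr fun b hb => by rw [tail b hb])

end OrderedPairs

section Monoid

variable {M α β : Type*} [Monoid M]

def pairProd (F : α → α → M) (l : List α) : M :=
  ((orderedPairs l).map fun p => F p.1 p.2).prod

lemma pairProd_cons (F : α → α → M) (a : α) (l : List α) :
    pairProd F (a :: l) = (l.map (F a)).prod * pairProd F l := by
  simp [pairProd, orderedPairs, Function.comp_def]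

lemma pairProd_commute {F : α → α → M} {x : M} {l : List α}
    (h : ∀ a ∈ l, ∀ b ∈ l, Commute (F a b) x) : Commute (pairProd F l) x :=
  Commute.list_prod_left _ _ fun _ hy => by
    obtain ⟨p, hp, rfl⟩ := List.mem_map.mp hy
    exact h _ (mem_orderedPairs hp).1 _ (mem_orderedPairs hp).2

lemma SemiconjBy.list_prod_map {a : M} {f g : β → M} {l : List β}
    (h : ∀ i ∈ l, SemiconjBy a (f i) (g i)) : SemiconjBy a (l.map f).prod (l.map g).prod := by
  induction l with
  | nil => exact SemiconjBy.one_right a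
  | cons i l ih =>
    simp only [List.map_cons, List.prod_cons]
    exact (h i List.mem_cons_self).mul_right (ih fun j hj => h j (List.mem_cons_of_mem i hj))

lemma List.prod_map_mul_prod_map_of_commute {f g : β → M} {l : List β} (hl : l.Nodup)
    (h : ∀ i ∈ l, ∀ j ∈ l, i ≠ j → Commute (f i) (g j)) :
    (l.map f).prod * (l.map g).prod = (l.map fun i => f i * g i).prod := by
  induction l with
  | nil => simp
  | cons i l ih =>
    obtain ⟨hi, hl⟩ := List.nodup_cons.mp hl
    have hg : Commute (l.map f).prod (g i) := Commute.list_prod_left _ _ fun _ hx => by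
      obtain ⟨j, hj, rfl⟩ := List.mem_map.mp hx
      exact h j (List.mem_cons_of_mem i hj) i List.mem_cons_self (fun hji => hi (hji ▸ hj))
    simp only [List.map_cons, List.prod_cons]
    rw [← ih hl fun j hj k hk => h j (List.mem_cons_of_mem i hj) k (List.mem_cons_of_mem i hk),
      mul_assoc, ← mul_assoc _ (g i), hg.eq]
    simp only [mul_assoc]

lemma List.prod_map_prod_map_comm_of_commute (A : α → β → M) {ks : List α} {is : List β}
    (hks : ks.Nodup) (his : is.Nodup)
    (h : ∀ k ∈ ks, ∀ l ∈ ks, ∀ i ∈ is, ∀ j ∈ is, k ≠ l → i ≠ j → Commute (A k i) (A l j)) :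
    (is.map fun i => (ks.map fun k => A k i).prod).prod
      = (ks.map fun k => (is.map fun i => A k i).prod).prod := by
  induction is with
  | nil => simp
  | cons i is ih =>
    obtain ⟨hi, his⟩ := List.nodup_cons.mp his
    simp only [List.map_cons, List.prod_cons]
    rw [ih his fun k hk l hl i' hi' j hj =>
      h k hk l hl i' (List.mem_cons_of_mem i hi') j (List.mem_cons_of_mem i hj)]
    refine List.prod_map_mul_prod_map_of_commute hks fun k hk l hl hkl =>
      Commute.list_prod_right _ _ fun _ hx => ?_
    obtain ⟨j, hj, rfl⟩ := List.mem_map.mp hx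
    exact h k hk l hl i List.mem_cons_self j (List.mem_cons_of_mem i hj) hkl
      (fun hij => hi (hij ▸ hj))

section Braid

-- In the application `A k` is `R` on site `k` and one fixed site of the other block, and `F a b`
-- is `R_{a,b}`; `hYB` is then the Yang–Baxter equation.
variable {A : α → M} {F : α → α → M}

lemma prod_map_semiconjBy_mul_prod_reverse
    (hYB : ∀ a b, a ≠ b → SemiconjBy (F a b) (A a * A b) (A b * A a))
    (hF : ∀ a b k, k ≠ a → k ≠ b → Commute (F a b) (A k))
    {a : α} {l : List α} (ha : a ∉ l) (hl : l.Nodup) :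
    SemiconjBy (l.map (F a)).prod (A a * (l.reverse.map A).prod)
      ((l.reverse.map A).prod * A a) := by
  induction l with
  | nil => simp
  | cons b l ih =>
    obtain ⟨hb, hl⟩ := List.nodup_cons.mp hl
    have hab : a ≠ b := fun h => ha (h ▸ List.mem_cons_self)
    have haL : a ∉ l := fun h => ha (List.mem_cons_of_mem b h)
    have hFT : Commute (F a b) (l.reverse.map A).prod := Commute.list_prod_right _ _ fun _ hx => by
      obtain ⟨k, hk, rfl⟩ := List.mem_map.mp hx
      exact hF a b k (fun h => haL (h ▸ List.mem_reverse.mp hk))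
        (fun h => hb (h ▸ List.mem_reverse.mp hk))
    have hΦA : Commute (l.map (F a)).prod (A b) := Commute.list_prod_left _ _ fun _ hx => by
      obtain ⟨k, hk, rfl⟩ := List.mem_map.mp hx
      exact hF a k b hab.symm (fun h => hb (h ▸ hk))
    simp only [List.map_cons, List.prod_cons, List.reverse_cons, List.map_append,
      List.prod_append, List.map_nil, List.prod_nil, mul_one]
    refine SemiconjBy.mul_left (y := (l.reverse.map A).prod * (A a * A b)) ?_ ?_
    · simpa only [mul_assoc] using SemiconjBy.mul_right hFT (hYB a b hab)
    · simpa only [mul_assoc] using (ih haL hl).mul_right hΦA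

lemma pairProd_semiconjBy_prod_map_prod_reverse
    (hYB : ∀ a b, a ≠ b → SemiconjBy (F a b) (A a * A b) (A b * A a))
    (hF : ∀ a b k, k ≠ a → k ≠ b → Commute (F a b) (A k)) {l : List α} (hl : l.Nodup) :
    SemiconjBy (pairProd F l) (l.map A).prod (l.reverse.map A).prod := by
  induction l with
  | nil => exact SemiconjBy.one_right _
  | cons a l ih =>
    obtain ⟨ha, hl⟩ := List.nodup_cons.mp hl
    have hPA : Commute (pairProd F l) (A a) := pairProd_commute fun b hb c hc =>
      hF b c a (fun h => ha (h ▸ hb)) (fun h => ha (h ▸ hc))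
    simp only [pairProd_cons, List.map_cons, List.prod_cons, List.reverse_cons, List.map_append,
      List.prod_append, List.map_nil, List.prod_nil, mul_one]
    exact (prod_map_semiconjBy_mul_prod_reverse hYB hF ha hl).mul_left
      (SemiconjBy.mul_right hPA (ih hl))

lemma prod_map_semiconjBy_prod_mul
    (hYB : ∀ a b, a ≠ b → SemiconjBy (F a b) (A b * A a) (A a * A b))
    (hF : ∀ a b k, k ≠ a → k ≠ b → Commute (F a b) (A k))
    {a : α} {l : List α} (ha : a ∉ l) (hl : l.Nodup) :
    SemiconjBy (l.map (F a)).prod ((l.map A).prod * A a) (A a * (l.map A).prod) := by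
  induction l with
  | nil => simp
  | cons b l ih =>
    obtain ⟨hb, hl⟩ := List.nodup_cons.mp hl
    have hab : a ≠ b := fun h => ha (h ▸ List.mem_cons_self)
    have haL : a ∉ l := fun h => ha (List.mem_cons_of_mem b h)
    have hFT : Commute (F a b) (l.map A).prod := Commute.list_prod_right _ _ fun _ hx => by
      obtain ⟨k, hk, rfl⟩ := List.mem_map.mp hx
      exact hF a b k (fun h => haL (h ▸ hk)) (fun h => hb (h ▸ hk))
    have hΦA : Commute (l.map (F a)).prod (A b) := Commute.list_prod_left _ _ fun _ hx => by
      obtain ⟨k, hk, rfl⟩ := List.mem_map.mp hx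
      exact hF a k b hab.symm (fun h => hb (h ▸ hk))
    simp only [List.map_cons, List.prod_cons]
    refine SemiconjBy.mul_left (y := A b * A a * (l.map A).prod) ?_ ?_
    · simpa only [mul_assoc] using (hYB a b hab).mul_right hFT
    · simpa only [mul_assoc] using SemiconjBy.mul_right hΦA (ih haL hl)

lemma pairProd_semiconjBy_prod_reverse_prod_map
    (hYB : ∀ a b, a ≠ b → SemiconjBy (F a b) (A b * A a) (A a * A b))
    (hF : ∀ a b k, k ≠ a → k ≠ b → Commute (F a b) (A k)) {l : List α} (hl : l.Nodup) :
    SemiconjBy (pairProd F l) (l.reverse.map A).prod (l.map A).prod := by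
  induction l with
  | nil => exact SemiconjBy.one_right _
  | cons a l ih =>
    obtain ⟨ha, hl⟩ := List.nodup_cons.mp hl
    have hPA : Commute (pairProd F l) (A a) := pairProd_commute fun b hb c hc =>
      hF b c a (fun h => ha (h ▸ hb)) (fun h => ha (h ▸ hc))
    simp only [pairProd_cons, List.map_cons, List.prod_cons, List.reverse_cons, List.map_append,
      List.prod_append, List.map_nil, List.prod_nil, mul_one]
    exact (prod_map_semiconjBy_prod_mul hYB hF ha hl).mul_left (SemiconjBy.mul_right (ih hl) hPA)

end Braid

end Monoid

section LocalOperators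

open scoped Kronecker

variable {N m n : ℕ}

lemma Fintype.prod_ite_boole_one {ι M₀ : Type*} [Fintype ι] [CommMonoidWithZero M₀]
    (P Q : ι → Prop) [DecidablePred P] [DecidablePred Q] :
    (∏ i, if P i then (if Q i then (1 : M₀) else 0) else 1) =
      if ∀ i, P i → Q i then 1 else 0 := by
  rw [← Fintype.prod_boole]
  exact Finset.prod_congr rfl fun i _ => by by_cases P i <;> simp [*]

lemma op2_apply (X : End2 N) (a b : Fin m) (f g : Fin m → Fin N) :
    op2 N m X a b f g =
      if ∀ i, i ≠ a → i ≠ b → f i = g i then X (f a, f b) (g a, g b) else 0 := by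
  simp [op2, Fintype.prod_ite_boole_one]

lemma opBlock_apply (e : Fin n → Fin m) (X : EndT N n) (f g : Fin m → Fin N) :
    opBlock N e X f g = if ∀ i, (∀ k, e k ≠ i) → f i = g i then X (f ∘ e) (g ∘ e) else 0 := by
  simp [opBlock, Fintype.prod_ite_boole_one]

noncomputable def siteSplit (e : Fin n → Fin m) (he : e.Injective) :
    (Fin m → Fin N) ≃ (Fin n → Fin N) × ({i // i ∉ Set.range e} → Fin N) :=
  (Equiv.piEquivPiSubtypeProd (· ∈ Set.range e) fun _ => Fin N).trans
    ((Equiv.arrowCongr (Equiv.ofInjective e he).symm (Equiv.refl _)).prodCongr (Equiv.refl _))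

lemma siteSplit_fst (e : Fin n → Fin m) (he : e.Injective) (f : Fin m → Fin N) :
    (siteSplit e he f).1 = f ∘ e :=
  rfl

lemma siteSplit_snd (e : Fin n → Fin m) (he : e.Injective) (f : Fin m → Fin N)
    (i : {i // i ∉ Set.range e}) : (siteSplit e he f).2 i = f i :=
  rfl

lemma opBlock_eq_submatrix_kronecker (e : Fin n → Fin m) (he : e.Injective) (X : EndT N n) :
    opBlock N e X =
      (X ⊗ₖ (1 : Matrix _ _ ℂ)).submatrix (siteSplit e he) (siteSplit e he) := by
  ext f g
  simp [opBlock_apply, siteSplit_fst, siteSplit_snd, Matrix.one_apply, funext_iff]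

noncomputable def opBlockHom (e : Fin n → Fin m) (he : e.Injective) : EndT N n →* EndT N m where
  toFun := opBlock N e
  map_one' := by
    rw [opBlock_eq_submatrix_kronecker e he, Matrix.one_kronecker_one, Matrix.submatrix_one_equiv]
  map_mul' X Y := by
    simp only [opBlock_eq_submatrix_kronecker e he, Matrix.submatrix_mul_equiv,
      ← Matrix.mul_kronecker_mul, mul_one]

lemma opBlockHom_apply (e : Fin n → Fin m) (he : e.Injective) (X : EndT N n) :
    opBlockHom e he X = opBlock N e X :=
  rfl

lemma opBlock_op2 (e : Fin n → Fin m) (he : e.Injective) (X : End2 N) (a b : Fin n) :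
    opBlock N e (op2 N n X a b) = op2 N m X (e a) (e b) := by
  ext f g
  rw [opBlock_apply, op2_apply, op2_apply, ← ite_and]
  simp only [Function.comp_apply]
  congr 1
  refine propext ⟨fun ⟨hout, hin⟩ i hia hib => ?_, fun h => ⟨fun i hi => ?_, fun k hka hkb => ?_⟩⟩
  · by_cases hi : ∃ k, e k = i
    · obtain ⟨k, rfl⟩ := hi
      exact hin k (fun h => hia (h ▸ rfl)) (fun h => hib (h ▸ rfl))
    · exact hout i (not_exists.mp hi)
  · exact h i (hi a).symm (hi b).symm
  · exact h (e k) (he.ne hka) (he.ne hkb)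

lemma op2_mul_op2_apply {X Y : End2 N} {a b c d : Fin m}
    (hac : a ≠ c) (had : a ≠ d) (hbc : b ≠ c) (hbd : b ≠ d) (f g : Fin m → Fin N) :
    (op2 N m X a b * op2 N m Y c d) f g =
      if ∀ i, i ≠ a → i ≠ b → i ≠ c → i ≠ d → f i = g i then
        X (f a, f b) (g a, g b) * Y (f c, f d) (g c, g d) else 0 := by
  set h₀ : Fin m → Fin N := fun i => if i = a ∨ i = b then g i else f i
  have h₀_ab : ∀ i, i = a ∨ i = b → h₀ i = g i := fun i h => if_pos h
  have h₀_off : ∀ i, i ≠ a → i ≠ b → h₀ i = f i := fun i ha hb => if_neg (by tauto)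
  rw [Matrix.mul_apply, Finset.sum_eq_single h₀]
  · rw [op2_apply, op2_apply, if_pos fun i ha hb => (h₀_off i ha hb).symm, h₀_ab a (.inl rfl),
      h₀_ab b (.inr rfl), h₀_off c hac.symm hbc.symm, h₀_off d had.symm hbd.symm, mul_ite, mul_zero]
    congr 1
    refine propext ⟨fun h i ha hb hc hd => h₀_off i ha hb ▸ h i hc hd, fun h i hc hd => ?_⟩
    by_cases hab : i = a ∨ i = b
    · exact h₀_ab i hab
    · obtain ⟨ha, hb⟩ := not_or.mp hab
      exact h₀_off i ha hb ▸ h i ha hb hc hd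
  · intro h _ hne
    rw [op2_apply, op2_apply]
    split_ifs with hfh hhg
    · refine absurd (funext fun i => ?_) hne
      by_cases hab : i = a ∨ i = b
      · rw [h₀_ab i hab]
        rcases hab with rfl | rfl
        exacts [hhg _ hac had, hhg _ hbc hbd]
      · obtain ⟨ha, hb⟩ := not_or.mp hab
        rw [h₀_off i ha hb, hfh i ha hb]
    all_goals simp
  · simp

lemma op2_commute {X Y : End2 N} {a b c d : Fin m}
    (hac : a ≠ c) (had : a ≠ d) (hbc : b ≠ c) (hbd : b ≠ d) :
    Commute (op2 N m X a b) (op2 N m Y c d) := by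
  ext f g
  rw [op2_mul_op2_apply hac had hbc hbd, op2_mul_op2_apply hac.symm hbc.symm had.symm hbd.symm,
    mul_comm]
  congr 1
  exact propext ⟨fun h i hc hd ha hb => h i ha hb hc hd, fun h i ha hb hc hd => h i hc hd ha hb⟩

lemma op2_yangBaxter {R : ℂ → End2 N} (hR : YangBaxter N R) {a b e : Fin m}
    (hab : a ≠ b) (hae : a ≠ e) (hbe : b ≠ e) (u v : ℂ) :
    op2 N m (R u) a b * op2 N m (R (u + v)) a e * op2 N m (R v) b e =
      op2 N m (R v) b e * op2 N m (R (u + v)) a e * op2 N m (R u) a b := by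
  have hinj : Function.Injective ![a, b, e] := by
    simp [Function.Injective, Fin.forall_fin_succ, hab, hae, hbe, eq_comm]
  have h := congrArg (opBlockHom ![a, b, e] hinj) (hR u v)
  simp only [map_mul, opBlockHom_apply, opBlock_op2 _ hinj] at h
  simpa using h

lemma lexPairs_eq_orderedPairs (n : ℕ) : lexPairs n = orderedPairs (List.finRange n) :=
  (orderedPairs_eq_flatMap_filter (List.pairwise_lt_finRange n)).symm

lemma opBlock_Fop (R : ℂ → End2 N) (e : Fin n → Fin m) (he : e.Injective) (c : Fin n → ℂ) :
    opBlock N e (Fop N R c) =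
      pairProd (fun a b => op2 N m (R (c a - c b)) (e a) (e b)) (List.finRange n) := by
  rw [Fop, lexPairs_eq_orderedPairs, ← opBlockHom_apply e he, map_list_prod, List.map_map]
  simp [pairProd, Function.comp_def, opBlockHom_apply, opBlock_op2 e he]

end LocalOperators

lemma Fin.castAdd_ne_natAdd {n n' : ℕ} (k : Fin n) (i : Fin n') :
    Fin.castAdd n' k ≠ Fin.natAdd n i :=
  Fin.ne_of_lt (Nat.lt_of_lt_of_le k.isLt (Nat.le_add_right n i))

lemma Matrix.mulVec_mem_range_mulVecLin_of_semiconjBy {ι K : Type*} [Fintype ι] [CommSemiring K]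
    {W S T : Matrix ι ι K} (h : SemiconjBy W S T) {x : ι → K}
    (hx : x ∈ LinearMap.range W.mulVecLin) : T.mulVec x ∈ LinearMap.range W.mulVecLin := by
  obtain ⟨y, rfl⟩ := hx
  exact ⟨S.mulVec y, by simp [Matrix.mulVec_mulVec, h.eq]⟩

section Fusion

variable {N n n' : ℕ}

def crossOp (R : ℂ → End2 N) (c : Fin n → ℂ) (c' : Fin n' → ℂ) (u : ℂ) (k : Fin n) (i : Fin n') :
    EndT N (n + n') :=
  op2 N (n + n') (R (u + c k - c' i)) (Fin.castAdd n' k) (Fin.natAdd n i)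

variable {R : ℂ → End2 N} (c : Fin n → ℂ) (c' : Fin n' → ℂ) (u : ℂ)

lemma crossOp_commute {k l : Fin n} {i j : Fin n'} (hkl : k ≠ l) (hij : i ≠ j) :
    Commute (crossOp R c c' u k i) (crossOp R c c' u l j) :=
  op2_commute ((Fin.castAdd_injective n n').ne hkl) (Fin.castAdd_ne_natAdd k j)
    (Fin.castAdd_ne_natAdd l i).symm ((Fin.natAdd_injective n' n).ne hij)

lemma fusedOp_eq_prod_crossOp :
    fusedOp N R (Fin.castAdd n') (Fin.natAdd n) c c' u =
      ((List.finRange n').map fun i =>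
        ((List.finRange n).reverse.map fun k => crossOp R c c' u k i).prod).prod :=
  rfl

lemma opBlock_Fop_semiconjBy_column (hR : YangBaxter N R) (i : Fin n') :
    SemiconjBy (opBlock N (Fin.castAdd n') (Fop N R c))
      ((List.finRange n).map fun k => crossOp R c c' u k i).prod
      ((List.finRange n).reverse.map fun k => crossOp R c c' u k i).prod := by
  rw [opBlock_Fop R _ (Fin.castAdd_injective n n')]
  refine pairProd_semiconjBy_prod_map_prod_reverse (fun a b hab => ?_) (fun a b k hka hkb => ?_)
    (List.nodup_finRange n)
  · have hYB := op2_yangBaxter hR ((Fin.castAdd_injective n n').ne hab)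
      (Fin.castAdd_ne_natAdd a i) (Fin.castAdd_ne_natAdd b i) (c a - c b) (u + c b - c' i)
    rw [show c a - c b + (u + c b - c' i) = u + c a - c' i by ring] at hYB
    simpa only [SemiconjBy, crossOp, mul_assoc] using hYB
  · exact op2_commute ((Fin.castAdd_injective n n').ne hka.symm) (Fin.castAdd_ne_natAdd a i)
      ((Fin.castAdd_injective n n').ne hkb.symm) (Fin.castAdd_ne_natAdd b i)

lemma opBlock_Fop_semiconjBy_row (hR : YangBaxter N R) (k : Fin n) :
    SemiconjBy (opBlock N (Fin.natAdd n) (Fop N R c'))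
      ((List.finRange n').reverse.map fun i => crossOp R c c' u k i).prod
      ((List.finRange n').map fun i => crossOp R c c' u k i).prod := by
  rw [opBlock_Fop R _ (Fin.natAdd_injective n' n)]
  refine pairProd_semiconjBy_prod_reverse_prod_map (fun a b hab => ?_) (fun a b i hia hib => ?_)
    (List.nodup_finRange n')
  · have hYB := op2_yangBaxter hR (Fin.castAdd_ne_natAdd k a) (Fin.castAdd_ne_natAdd k b)
      ((Fin.natAdd_injective n' n).ne hab) (u + c k - c' a) (c' a - c' b)
    rw [show u + c k - c' a + (c' a - c' b) = u + c k - c' b by ring] at hYB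
    simpa only [SemiconjBy, crossOp, mul_assoc] using hYB.symm
  · exact op2_commute (Fin.castAdd_ne_natAdd k a).symm ((Fin.natAdd_injective n' n).ne hia.symm)
      (Fin.castAdd_ne_natAdd k b).symm ((Fin.natAdd_injective n' n).ne hib.symm)

theorem opBlock_Fop_mul_semiconjBy_fusedOp (hR : YangBaxter N R) :
    SemiconjBy (opBlock N (Fin.castAdd n') (Fop N R c) * opBlock N (Fin.natAdd n) (Fop N R c'))
      ((List.finRange n).map fun k =>
        ((List.finRange n').reverse.map fun i => crossOp R c c' u k i).prod).prod
      (fusedOp N R (Fin.castAdd n') (Fin.natAdd n) c c' u) := by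
  have hcolumns := SemiconjBy.list_prod_map (l := List.finRange n') fun i _ =>
    opBlock_Fop_semiconjBy_column c c' u hR i
  have hrows := SemiconjBy.list_prod_map (l := List.finRange n) fun k _ =>
    opBlock_Fop_semiconjBy_row c c' u hR k
  rw [List.prod_map_prod_map_comm_of_commute (crossOp R c c' u) (List.nodup_finRange n)
    (List.nodup_finRange n') fun k _ l _ i _ j _ => crossOp_commute c c' u] at hcolumns
  rw [fusedOp_eq_prod_crossOp]
  exact hcolumns.mul_left hrows

end Fusion

theorem fused_preserves_subspace_general
    (N : ℕ) (R : ℂ → End2 N) (hR : YangBaxter N R)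
    (n n' : ℕ)
    (c : Fin n → ℂ) (c' : Fin n' → ℂ) (u : ℂ) :
    ∀ x ∈ LinearMap.range (Matrix.mulVecLin
        (opBlock N (Fin.castAdd n') (Fop N R c) * opBlock N (Fin.natAdd n) (Fop N R c'))),
      Matrix.mulVec (fusedOp N R (Fin.castAdd n') (Fin.natAdd n) c c' u) x ∈
      LinearMap.range (Matrix.mulVecLin
        (opBlock N (Fin.castAdd n') (Fop N R c) * opBlock N (Fin.natAdd n) (Fop N R c'))) :=
  fun _ => Matrix.mulVec_mem_range_mulVecLin_of_semiconjBy
    (opBlock_Fop_mul_semiconjBy_fusedOp c c' u hR)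

/-- The fused operator `R_{c,c'}(u)` maps the subspace `W_c ⊗ W_{c'}`
of `V^{⊗n} ⊗ V^{⊗n'}` (the image of `F(c) ⊗ F(c')`) into itself. -/
theorem fused_preserves_subspace
    (N : ℕ) (R : ℂ → End2 N) (hR : YangBaxter N R)
    (n n' : ℕ) (hn : 2 ≤ n) (hn' : 2 ≤ n')
    (c : Fin n → ℂ) (c' : Fin n' → ℂ) (u : ℂ) :
    ∀ x ∈ LinearMap.range (Matrix.mulVecLin
        (opBlock N (Fin.castAdd n') (Fop N R c) * opBlock N (Fin.natAdd n) (Fop N R c'))),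
      Matrix.mulVec (fusedOp N R (Fin.castAdd n') (Fin.natAdd n) c c' u) x ∈
      LinearMap.range (Matrix.mulVecLin
        (opBlock N (Fin.castAdd n') (Fop N R c) * opBlock N (Fin.natAdd n) (Fop N R c'))) :=
  fused_preserves_subspace_general N R hR n n' c c' u
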